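/- (Rigorous core of Theorem 2: LT codes are not universal) The corner-point density evolution map G is continuous and nondecreasing on [0,1] with G(0) > 0 and G(1) ≤ 1, and the density evolution sequence defined by y_0 = 1 and y_{i+1} = G(y_i) is nonincreasing and converges to a fixed point L of G satisfying L ≥ ((1−p)·e^{−β(μ+1)})^{1/(1−β)} > 0. Hence the residual erasure probability of the LT ensemble designed for the extremal symmetric point is bounded away from zero at the corner point, uniformly in the truncation level N, so these LT codes cannot simultaneously achieve the extremal symmetric point and a corner point of the capacity region under iterative decoding. -/

import Mathlib

/-!
Writing `P` for the numerator of `ρ^N`, the choice of `α` and `β` turns the map into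
`G y = C · exp (-β · P (1 - y))` with `1 - p ≤ C ≤ 1`. Since `a_i ≤ 1 / i`, the truncated series
in `P (1 - y)` is dominated by `∑ (1 - y)^i / i = -log y`, so `P (1 - y) ≤ μ + 1 - log y` and
`G y ≥ c · y^β` with `c = (1 - p) e^{-β(μ+1)}`. As `β < 1`, the map `y ↦ c · y^β` has the fixed point
`K = c^{1/(1-β)} ∈ (0, 1]`, hence `K ≤ G K`. The monotone map `G` therefore sends `[K, 1]` into
itself, and its iterates from `1` decrease to a fixed point in `[K, 1]`.
-/

open Real Filter

noncomputable def qp (p x : ℝ) : ℝ :=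
  (Real.sqrt ((1 - p) ^ 2 + 4 * p * x) - (1 - p)) / (2 * p)

noncomputable def aCoeff (p : ℝ) (i : ℕ) : ℝ :=
  (∑ k ∈ Finset.range i, (Nat.choose (2 * i - 1) k : ℝ) * p ^ k) /
    (i * (1 + p) ^ (2 * i - 1))

noncomputable def Gpart (p : ℝ) (N : ℕ) : ℝ := ∑ i ∈ Finset.Icc 1 N, aCoeff p i

noncomputable def Sp (p x : ℝ) : ℝ := - Real.log (qp p (1 - x))

noncomputable def rhoN (p μ : ℝ) (N : ℕ) (x : ℝ) : ℝ :=
  (μ + (∑ i ∈ Finset.Icc 1 N, aCoeff p i * x ^ i) + x ^ N) / (μ + Gpart p N + 1)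

noncomputable def lamBarN (p μ : ℝ) (N : ℕ) (x : ℝ) : ℝ :=
  Real.exp (-(μ + Gpart p N + 1) * rhoN p μ N (1 - x))

noncomputable def deSym (p μ : ℝ) (N : ℕ) (x : ℝ) : ℝ :=
  ((1 - p) + p * lamBarN p μ N x) * lamBarN p μ N x

noncomputable def cornerMap (p μ : ℝ) (N : ℕ) (α ε₁ ε₂ : ℝ) (y : ℝ) : ℝ :=
  ((1 - p) + p * Real.exp (-(α * (1 - ε₁)))) *
    Real.exp (-(α * (1 - ε₂)) * rhoN p μ N (1 - y))

open Set Topology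

section Iteration

variable {α : Type*} {f : α → α} {a b : α}

theorem MonotoneOn.iterate_mem_Icc [Preorder α] (hf : MonotoneOn f (Icc a b)) (ha : a ≤ f a)
    (hb : f b ≤ b) (hab : a ≤ b) (n : ℕ) : f^[n] b ∈ Icc a b :=
  (hf.mapsTo_Icc.mono_right (Icc_subset_Icc ha hb)).iterate n (right_mem_Icc.2 hab)

theorem MonotoneOn.antitone_iterate_Icc [Preorder α] (hf : MonotoneOn f (Icc a b)) (ha : a ≤ f a)
    (hb : f b ≤ b) (hab : a ≤ b) : Antitone fun n => f^[n] b := by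
  have hmem := hf.iterate_mem_Icc ha hb hab
  refine antitone_nat_of_succ_le fun n => ?_
  induction n with
  | zero => simpa using hb
  | succ n ih =>
    have h := hf (hmem _) (hmem _) ih
    rwa [← Function.iterate_succ_apply' f (n + 1), ← Function.iterate_succ_apply' f n] at h

theorem MonotoneOn.exists_tendsto_iterate_eq_of_Icc [ConditionallyCompleteLinearOrder α]
    [TopologicalSpace α] [OrderTopology α] (hf : MonotoneOn f (Icc a b))
    (hfc : ContinuousOn f (Icc a b)) (ha : a ≤ f a) (hb : f b ≤ b) (hab : a ≤ b) :
    ∃ L ∈ Icc a b, Tendsto (fun n => f^[n] b) atTop (𝓝 L) ∧ f L = L := by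
  have hmem := hf.iterate_mem_Icc ha hb hab
  have hlim : Tendsto (fun n => f^[n] b) atTop (𝓝 (⨅ n, f^[n] b)) :=
    tendsto_atTop_ciInf (hf.antitone_iterate_Icc ha hb hab) ⟨a, by
      rintro _ ⟨n, rfl⟩
      exact (hmem n).1⟩
  have hL : ⨅ n, f^[n] b ∈ Icc a b :=
    isClosed_Icc.mem_of_tendsto hlim (Eventually.of_forall hmem)
  refine ⟨_, hL, hlim, tendsto_nhds_unique ?_ (hlim.comp (tendsto_add_atTop_nat 1))⟩
  have hlim' := (hfc _ hL).tendsto.comp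
    (tendsto_nhdsWithin_iff.2 ⟨hlim, Eventually.of_forall hmem⟩)
  simpa only [Function.comp_def, ← Function.iterate_succ_apply' f] using hlim'

end Iteration

theorem sum_Icc_pow_div_le_neg_log {x : ℝ} (hx0 : 0 ≤ x) (hx1 : x < 1) (N : ℕ) :
    ∑ i ∈ Finset.Icc 1 N, x ^ i / i ≤ -log (1 - x) := by
  have hsum := hasSum_pow_div_log_of_abs_lt_one (abs_lt.2 ⟨by linarith, hx1⟩)
  rw [← Finset.Ico_add_one_right_eq_Icc, Finset.sum_Ico_eq_sum_range, Nat.add_sub_cancel]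
  refine le_of_eq_of_le (Finset.sum_congr rfl fun i _ => ?_)
    (sum_le_hasSum (Finset.range N) (fun i _ => by positivity) hsum)
  rw [add_comm 1 i, Nat.cast_succ]

theorem sum_range_choose_mul_pow_le {p : ℝ} (hp : 0 ≤ p) {m n : ℕ} (hmn : m ≤ n + 1) :
    ∑ k ∈ Finset.range m, (n.choose k : ℝ) * p ^ k ≤ (1 + p) ^ n :=
  calc ∑ k ∈ Finset.range m, (n.choose k : ℝ) * p ^ k
      ≤ ∑ k ∈ Finset.range (n + 1), (n.choose k : ℝ) * p ^ k :=
        Finset.sum_le_sum_of_subset_of_nonneg (Finset.range_subset_range.2 hmn)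
          fun _ _ _ => by positivity
    _ = (1 + p) ^ n := by
        rw [add_comm 1 p, add_pow]
        simp only [one_pow, mul_one, mul_comm]

theorem aCoeff_nonneg {p : ℝ} (hp : 0 ≤ p) (i : ℕ) : 0 ≤ aCoeff p i :=
  div_nonneg (Finset.sum_nonneg fun _ _ => by positivity) (by positivity)

theorem aCoeff_le_inv {p : ℝ} (hp : 0 ≤ p) (i : ℕ) : aCoeff p i ≤ (i : ℝ)⁻¹ := by
  rcases Nat.eq_zero_or_pos i with rfl | hi
  · simp [aCoeff]
  rw [aCoeff, div_le_iff₀ (by positivity), inv_mul_cancel_left₀ (by positivity)]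
  exact sum_range_choose_mul_pow_le hp (by omega)

theorem Gpart_nonneg {p : ℝ} (hp : 0 ≤ p) (N : ℕ) : 0 ≤ Gpart p N :=
  Finset.sum_nonneg fun i _ => aCoeff_nonneg hp i

theorem sum_aCoeff_mul_pow_le_neg_log {p x : ℝ} (hp : 0 ≤ p) (hx0 : 0 ≤ x) (hx1 : x < 1)
    (N : ℕ) : ∑ i ∈ Finset.Icc 1 N, aCoeff p i * x ^ i ≤ -log (1 - x) :=
  calc ∑ i ∈ Finset.Icc 1 N, aCoeff p i * x ^ i
      ≤ ∑ i ∈ Finset.Icc 1 N, x ^ i / i := Finset.sum_le_sum fun i _ => by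
        rw [div_eq_inv_mul]
        exact mul_le_mul_of_nonneg_right (aCoeff_le_inv hp i) (by positivity)
    _ ≤ -log (1 - x) := sum_Icc_pow_div_le_neg_log hx0 hx1 N

noncomputable def rhoNumN (p μ : ℝ) (N : ℕ) (x : ℝ) : ℝ :=
  μ + (∑ i ∈ Finset.Icc 1 N, aCoeff p i * x ^ i) + x ^ N

section RhoNum

variable {p μ : ℝ} {N : ℕ}

theorem continuous_rhoNumN : Continuous (rhoNumN p μ N) := by
  unfold rhoNumN
  fun_prop

theorem rhoNumN_nonneg (hp : 0 ≤ p) (hμ : 0 ≤ μ) {x : ℝ} (hx : 0 ≤ x) : 0 ≤ rhoNumN p μ N x :=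
  add_nonneg (add_nonneg hμ (Finset.sum_nonneg fun i _ =>
    mul_nonneg (aCoeff_nonneg hp i) (by positivity))) (by positivity)

theorem monotoneOn_rhoNumN (hp : 0 ≤ p) : MonotoneOn (rhoNumN p μ N) (Ici 0) := by
  intro x hx y _ hxy
  unfold rhoNumN
  gcongr with i
  exact aCoeff_nonneg hp i

theorem rhoNumN_one_sub_le (hp : 0 ≤ p) {y : ℝ} (hy0 : 0 < y) (hy1 : y ≤ 1) :
    rhoNumN p μ N (1 - y) ≤ μ + 1 - log y := by
  have hseries := sum_aCoeff_mul_pow_le_neg_log hp (sub_nonneg.2 hy1) (by linarith : 1 - y < 1) N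
  rw [sub_sub_cancel] at hseries
  have hpow : (1 - y) ^ N ≤ 1 := pow_le_one₀ (sub_nonneg.2 hy1) (by linarith)
  unfold rhoNumN
  linarith

end RhoNum

noncomputable def scaledCornerMap (p μ : ℝ) (N : ℕ) (C β y : ℝ) : ℝ :=
  C * exp (-(β * rhoNumN p μ N (1 - y)))

theorem cornerMap_eq_scaledCornerMap {p μ : ℝ} {N : ℕ} {α β ε ε₁ ε₂ : ℝ}
    (hD : μ + Gpart p N + 1 ≠ 0)
    (hα : α = (μ + Gpart p N + 1) / (1 - ε)) (hβ : β = (1 - ε₂) / (1 - ε)) :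
    cornerMap p μ N α ε₁ ε₂ =
      scaledCornerMap p μ N ((1 - p) + p * exp (-(α * (1 - ε₁)))) β := by
  ext y
  rw [cornerMap, scaledCornerMap, rhoN, ← rhoNumN, hα, hβ]
  field_simp

section ScaledCornerMap

variable {p μ : ℝ} {N : ℕ} {C β : ℝ}

theorem continuous_scaledCornerMap : Continuous (scaledCornerMap p μ N C β) := by
  unfold scaledCornerMap
  have := (continuous_rhoNumN (p := p) (μ := μ) (N := N)).comp (continuous_sub_left 1)
  fun_prop

theorem scaledCornerMap_pos (hC : 0 < C) (y : ℝ) : 0 < scaledCornerMap p μ N C β y :=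
  mul_pos hC (exp_pos _)

theorem scaledCornerMap_le_one (hp : 0 ≤ p) (hμ : 0 ≤ μ) (hC : C ≤ 1) (hβ : 0 ≤ β) {y : ℝ}
    (hy : y ≤ 1) : scaledCornerMap p μ N C β y ≤ 1 := by
  have hexp : exp (-(β * rhoNumN p μ N (1 - y))) ≤ 1 :=
    exp_le_one_iff.2 (neg_nonpos.2 (mul_nonneg hβ (rhoNumN_nonneg hp hμ (sub_nonneg.2 hy))))
  calc scaledCornerMap p μ N C β y ≤ 1 * 1 := mul_le_mul hC hexp (exp_pos _).le zero_le_one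
    _ = 1 := one_mul 1

theorem monotoneOn_scaledCornerMap (hp : 0 ≤ p) (hC : 0 ≤ C) (hβ : 0 ≤ β) :
    MonotoneOn (scaledCornerMap p μ N C β) (Icc 0 1) := by
  intro x hx y hy hxy
  have hρ : rhoNumN p μ N (1 - y) ≤ rhoNumN p μ N (1 - x) :=
    monotoneOn_rhoNumN hp (sub_nonneg.2 hy.2) (sub_nonneg.2 hx.2) (by linarith)
  unfold scaledCornerMap
  gcongr

theorem mul_exp_mul_rpow_le_scaledCornerMap (hp : 0 ≤ p) {c : ℝ} (hc : 0 ≤ c) (hcC : c ≤ C)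
    (hβ : 0 ≤ β) {y : ℝ} (hy0 : 0 < y) (hy1 : y ≤ 1) :
    c * exp (-(β * (μ + 1))) * y ^ β ≤ scaledCornerMap p μ N C β y := by
  have hρ := rhoNumN_one_sub_le (μ := μ) (N := N) hp hy0 hy1
  calc c * exp (-(β * (μ + 1))) * y ^ β = c * exp (-(β * (μ + 1 - log y))) := by
        rw [rpow_def_of_pos hy0, mul_assoc, ← exp_add]
        ring_nf
    _ ≤ scaledCornerMap p μ N C β y := by
        have hC := hc.trans hcC
        unfold scaledCornerMap
        gcongr

end ScaledCornerMap

theorem mul_rpow_one_div_one_sub_rpow {c β : ℝ} (hc : 0 < c) (hβ : β ≠ 1) :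
    c * (c ^ (1 / (1 - β))) ^ β = c ^ (1 / (1 - β)) := by
  have h1β : 1 - β ≠ 0 := sub_ne_zero.2 hβ.symm
  rw [← rpow_mul hc.le, ← rpow_one_add' hc.le]
  · congr 1
    field_simp
    ring
  · field_simp
    simpa using h1β

theorem stmt15_general (p : ℝ) (hp0 : 0 < p) (hp1 : p < 1) (μ : ℝ) (hμ : 0 < μ)
    (N : ℕ)
    (ε ε₁ ε₂ : ℝ) (hε : ε ∈ Set.Ico (0 : ℝ) 1) (hε₁ : ε₁ ∈ Set.Ico (0 : ℝ) 1)
    (α β : ℝ) (hα : α = (μ + Gpart p N + 1) / (1 - ε)) (hβ : β = (1 - ε₂) / (1 - ε))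
    (hβ0 : 0 < β) (hβ1 : β < 1) :
    ContinuousOn (cornerMap p μ N α ε₁ ε₂) (Set.Icc 0 1) ∧
    MonotoneOn (cornerMap p μ N α ε₁ ε₂) (Set.Icc 0 1) ∧
    0 < cornerMap p μ N α ε₁ ε₂ 0 ∧
    cornerMap p μ N α ε₁ ε₂ 1 ≤ 1 ∧
    Antitone (fun n : ℕ => (cornerMap p μ N α ε₁ ε₂)^[n] 1) ∧
    ∃ L : ℝ,
      Filter.Tendsto (fun n : ℕ => (cornerMap p μ N α ε₁ ε₂)^[n] 1)
        Filter.atTop (nhds L) ∧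
      cornerMap p μ N α ε₁ ε₂ L = L ∧
      ((1 - p) * Real.exp (-(β * (μ + 1)))) ^ (1 / (1 - β)) ≤ L ∧
      0 < ((1 - p) * Real.exp (-(β * (μ + 1)))) ^ (1 / (1 - β)) := by
  set C := (1 - p) + p * exp (-(α * (1 - ε₁)))
  set c := (1 - p) * exp (-(β * (μ + 1)))
  set K := c ^ (1 / (1 - β))
  have hD : 0 < μ + Gpart p N + 1 := by linarith [Gpart_nonneg hp0.le N]
  have hα0 : 0 ≤ α := hα ▸ div_nonneg hD.le (by linarith [hε.2])
  have hpC : 1 - p ≤ C := le_add_of_nonneg_right (by positivity)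
  have hC1 : C ≤ 1 := by
    have : exp (-(α * (1 - ε₁))) ≤ 1 := exp_le_one_iff.2 (by nlinarith [hε₁.2])
    nlinarith
  have hc0 : 0 < c := mul_pos (sub_pos.2 hp1) (exp_pos _)
  have hc1 : c ≤ 1 :=
    mul_le_one₀ (by linarith) (exp_pos _).le (exp_le_one_iff.2 (by nlinarith))
  have hK0 : 0 < K := rpow_pos_of_pos hc0 _
  have hK1 : K ≤ 1 := rpow_le_one hc0.le hc1 (one_div_nonneg.2 (sub_pos.2 hβ1).le)
  have hC0 : 0 < C := by linarith
  rw [cornerMap_eq_scaledCornerMap hD.ne' hα hβ]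
  have hmono : MonotoneOn (scaledCornerMap p μ N C β) (Icc 0 1) :=
    monotoneOn_scaledCornerMap hp0.le hC0.le hβ0.le
  have hG1 : scaledCornerMap p μ N C β 1 ≤ 1 :=
    scaledCornerMap_le_one hp0.le hμ.le hC1 hβ0.le le_rfl
  have hKG : K ≤ scaledCornerMap p μ N C β K :=
    calc K = c * K ^ β := (mul_rpow_one_div_one_sub_rpow hc0 hβ1.ne).symm
      _ ≤ _ := mul_exp_mul_rpow_le_scaledCornerMap hp0.le (sub_pos.2 hp1).le hpC hβ0.le hK0 hK1
  have hmonoK := hmono.mono (Icc_subset_Icc hK0.le le_rfl)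
  obtain ⟨L, hL, hlim, hfix⟩ := hmonoK.exists_tendsto_iterate_eq_of_Icc
    continuous_scaledCornerMap.continuousOn hKG hG1 hK1
  exact ⟨continuous_scaledCornerMap.continuousOn, hmono, scaledCornerMap_pos hC0 0,
    hG1, hmonoK.antitone_iterate_Icc hKG hG1 hK1, L, hlim, hfix, hL.1, hK0⟩

theorem stmt15 (p : ℝ) (hp0 : 0 < p) (hp1 : p < 1) (μ : ℝ) (hμ : 0 < μ)
    (N : ℕ) (hN : 1 ≤ N)
    (ε ε₁ ε₂ : ℝ) (hε : ε ∈ Set.Ico (0 : ℝ) 1) (hε₁ : ε₁ ∈ Set.Ico (0 : ℝ) 1)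
    (hε₂ : ε₂ ∈ Set.Ico (0 : ℝ) 1) (hεε₂ : ε < ε₂)
    (α β : ℝ) (hα : α = (μ + Gpart p N + 1) / (1 - ε)) (hβ : β = (1 - ε₂) / (1 - ε))
    (hβ0 : 0 < β) (hβ1 : β < 1) :
    ContinuousOn (cornerMap p μ N α ε₁ ε₂) (Set.Icc 0 1) ∧
    MonotoneOn (cornerMap p μ N α ε₁ ε₂) (Set.Icc 0 1) ∧
    0 < cornerMap p μ N α ε₁ ε₂ 0 ∧
    cornerMap p μ N α ε₁ ε₂ 1 ≤ 1 ∧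
    Antitone (fun n : ℕ => (cornerMap p μ N α ε₁ ε₂)^[n] 1) ∧
    ∃ L : ℝ,
      Filter.Tendsto (fun n : ℕ => (cornerMap p μ N α ε₁ ε₂)^[n] 1)
        Filter.atTop (nhds L) ∧
      cornerMap p μ N α ε₁ ε₂ L = L ∧
      ((1 - p) * Real.exp (-(β * (μ + 1)))) ^ (1 / (1 - β)) ≤ L ∧
      0 < ((1 - p) * Real.exp (-(β * (μ + 1)))) ^ (1 / (1 - β)) :=
  stmt15_general p hp0 hp1 μ hμ N ε ε₁ ε₂ hε hε₁ α β hα hβ hβ0 hβ1
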